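/- In the setting of the isotropic metric ds² = f(H)dt² − g(H)d\vec{x}² on ℝ⁴, let u : ℝ → ℝ be a smooth solution of u' = −2f'/(3f) − 2f'/(3g), let v = (4/3)·log∘g, and define the symmetric 2-tensor field A on ℝ⁴ by A_{00} = u(H), A_{jj} = v(H) for j = 1,2,3, and A_{μν} = 0 for μ ≠ ν. Let F_{μνλ} = Γ_{μνλ} − Γ_{(μνλ)} be the symmetric-free part of the (η-lowered) Christoffel symbols. Then F = d_G A; explicitly, for all μ, ν, λ ∈ {0,1,2,3}: F_{μνλ} = ½ ∂_μ A_{νλ} − ¼ (∂_ν A_{μλ} + ∂_λ A_{μν}). -/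

import Mathlib

/-- The partial derivative of a function on `ℝ⁴` (or `ℝⁿ`) in the `j`-th coordinate
direction. -/
noncomputable def pdR {n : ℕ} (j : Fin n) (f : (Fin n → ℝ) → ℝ) : (Fin n → ℝ) → ℝ :=
  fun x => fderiv ℝ f x (Pi.single j 1)

/-- The spatial part `(x¹, x², x³)` of a point of `ℝ⁴` (with `x⁰ = t`). -/
def sp (x : Fin 4 → ℝ) : Fin 3 → ℝ := fun j => x j.succ

/-- The diagonal metric components of `ds² = f(H) dt² − g(H) d\vec{x}²`:
`g₀₀ = f(H(x¹,x²,x³))`, `g_jj = −g(H(x¹,x²,x³))` for `j = 1,2,3`, zero off-diagonal. -/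
noncomputable def met (f g : ℝ → ℝ) (H : (Fin 3 → ℝ) → ℝ) (μ ν : Fin 4) :
    (Fin 4 → ℝ) → ℝ :=
  fun x => if μ = ν then (if μ = 0 then f (H (sp x)) else -(g (H (sp x)))) else 0

/-- The inverse metric components: `g⁰⁰ = 1/f(H)`, `g^jj = −1/g(H)`, zero off-diagonal. -/
noncomputable def metInv (f g : ℝ → ℝ) (H : (Fin 3 → ℝ) → ℝ) (μ ν : Fin 4) :
    (Fin 4 → ℝ) → ℝ :=
  fun x => if μ = ν then (if μ = 0 then (f (H (sp x)))⁻¹ else -(g (H (sp x)))⁻¹) else 0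

/-- The flat metric `η = diag(+1, −1, −1, −1)`. -/
noncomputable def eta (μ ν : Fin 4) : ℝ :=
  if μ = ν then (if μ = 0 then 1 else -1) else 0

/-- The Christoffel symbols
`Γ^τ_{νλ} = ½ ∑_ρ g^{τρ} (∂_ν g_{ρλ} + ∂_λ g_{ρν} − ∂_ρ g_{νλ})`. -/
noncomputable def chrUp (f g : ℝ → ℝ) (H : (Fin 3 → ℝ) → ℝ) (τ ν lam : Fin 4) :
    (Fin 4 → ℝ) → ℝ :=
  fun x => (1 / 2 : ℝ) * ∑ ρ : Fin 4, metInv f g H τ ρ x *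
    (pdR ν (met f g H ρ lam) x + pdR lam (met f g H ρ ν) x - pdR ρ (met f g H ν lam) x)

/-- The Christoffel symbols with the upper index lowered by the flat metric `η`:
`Γ_{μνλ} = ∑_τ η_{μτ} Γ^τ_{νλ}`. -/
noncomputable def chrLow (f g : ℝ → ℝ) (H : (Fin 3 → ℝ) → ℝ) (μ ν lam : Fin 4) :
    (Fin 4 → ℝ) → ℝ :=
  fun x => ∑ τ : Fin 4, eta μ τ * chrUp f g H τ ν lam x

/-- The complete symmetrization `Γ_{(μνλ)} = (1/3!) ∑_{σ ∈ Perm(Fin 3)}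
Γ_{μ_{σ(1)} μ_{σ(2)} μ_{σ(3)}}` of a 3-indexed family of functions. -/
noncomputable def symPart (Γ : Fin 4 → Fin 4 → Fin 4 → (Fin 4 → ℝ) → ℝ)
    (μ ν lam : Fin 4) : (Fin 4 → ℝ) → ℝ :=
  fun x => (Nat.factorial 3 : ℝ)⁻¹ * ∑ σ : Equiv.Perm (Fin 3),
    Γ (![μ, ν, lam] (σ 0)) (![μ, ν, lam] (σ 1)) (![μ, ν, lam] (σ 2)) x

/-- The symmetric-free part `F_{μνλ} = Γ_{μνλ} − Γ_{(μνλ)}` of the η-lowered Christoffel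
symbols of the isotropic metric. -/
noncomputable def Fsf (f g : ℝ → ℝ) (H : (Fin 3 → ℝ) → ℝ) (μ ν lam : Fin 4) :
    (Fin 4 → ℝ) → ℝ :=
  fun x => chrLow f g H μ ν lam x - symPart (chrLow f g H) μ ν lam x

/-- The gravitational potential `A = u(H) dt² + v(H) d\vec{x}²`: `A₀₀ = u(H)`,
`A_jj = v(H)` for `j = 1,2,3`, zero off-diagonal. -/
noncomputable def Apot (u v : ℝ → ℝ) (H : (Fin 3 → ℝ) → ℝ) (μ ν : Fin 4) :
    (Fin 4 → ℝ) → ℝ :=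
  fun x => if μ = ν then (if μ = 0 then u (H (sp x)) else v (H (sp x))) else 0

/-! The metric and the potential depend on `x` only through `H (x¹, x², x³)`, so by the chain rule
every derivative `∂_a` of one of their components is the derivative of its coefficient function at
`H`, times `D a = ∂_a (H ∘ sp)`, and `D 0 = 0`. Hence `F` and `d_G A` are both linear in `D`, with
coefficients built from `f, g, f', g', u', v'` at `H`, and `F = d_G A` becomes an identity between
these numbers, checked index by index. The equation for `u'` and the choice `v = (4/3) log g` are
exactly what make the coefficients agree. -/

lemma pdR_comp {n : ℕ} (j : Fin n) {φ : ℝ → ℝ} {ψ : (Fin n → ℝ) → ℝ} {x : Fin n → ℝ}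
    (hφ : DifferentiableAt ℝ φ (ψ x)) (hψ : DifferentiableAt ℝ ψ x) :
    pdR j (fun y => φ (ψ y)) x = deriv φ (ψ x) * pdR j ψ x := by
  have h := (hφ.hasDerivAt.comp_hasFDerivAt x hψ.hasFDerivAt).fderiv
  simp only [pdR, Function.comp_def] at h ⊢
  simp [h]

lemma pdR_zero_comp_sp (H : (Fin 3 → ℝ) → ℝ) (x : Fin 4 → ℝ) :
    pdR 0 (fun y => H (sp y)) x = 0 := by
  by_cases hd : DifferentiableAt ℝ (fun y => H (sp y)) x
  · have hconst : ∀ t : ℝ, sp (x + t • Pi.single 0 1) = sp x := fun t => by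
      funext j
      simp [sp, Fin.succ_ne_zero]
    simp only [pdR, ← hd.lineDeriv_eq_fderiv, lineDeriv, hconst, deriv_const]
  · simp [pdR, fderiv_zero_of_not_differentiableAt hd]

lemma differentiable_sp : Differentiable ℝ sp := by
  unfold sp; fun_prop

def diag4 {α : Type*} [Zero α] (p q : α) (b c : Fin 4) : α :=
  if b = c then (if b = 0 then p else q) else 0

lemma diag4_apply {α β : Type*} [Zero β] (p q : α → β) (b c : Fin 4) (t : α) :
    diag4 p q b c t = diag4 (p t) (q t) b c := by
  unfold diag4; split_ifs <;> rfl

lemma differentiableAt_diag4 {p q : ℝ → ℝ} {t : ℝ} (hp : DifferentiableAt ℝ p t)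
    (hq : DifferentiableAt ℝ q t) (b c : Fin 4) : DifferentiableAt ℝ (diag4 p q b c) t := by
  unfold diag4; split_ifs <;> first | assumption | exact differentiableAt_const _

lemma deriv_diag4 (p q : ℝ → ℝ) (b c : Fin 4) (t : ℝ) :
    deriv (diag4 p q b c) t = diag4 (deriv p t) (deriv q t) b c := by
  unfold diag4; split_ifs <;> simp

lemma sum_diag4_mul (p q : ℝ) (a : Fin 4) (X : Fin 4 → ℝ) :
    ∑ τ, diag4 p q a τ * X τ = diag4 p q a a * X a :=
  Finset.sum_eq_single a (fun τ _ hτ => by simp [diag4, Ne.symm hτ]) (by simp)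

lemma Apot_eq_diag4 (u v : ℝ → ℝ) (H : (Fin 3 → ℝ) → ℝ) (b c : Fin 4) :
    Apot u v H b c = fun y => diag4 u v b c (H (sp y)) := by
  funext y; simp only [Apot, diag4_apply]; rfl

lemma pdR_Apot {u v : ℝ → ℝ} {H : (Fin 3 → ℝ) → ℝ} {x : Fin 4 → ℝ}
    (hu : DifferentiableAt ℝ u (H (sp x))) (hv : DifferentiableAt ℝ v (H (sp x)))
    (hH : DifferentiableAt ℝ H (sp x)) (a b c : Fin 4) :
    pdR a (Apot u v H b c) x =
      diag4 (deriv u (H (sp x))) (deriv v (H (sp x))) b c * pdR a (fun y => H (sp y)) x := by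
  rw [Apot_eq_diag4, pdR_comp (ψ := fun y => H (sp y)) a (differentiableAt_diag4 hu hv b c)
    (hH.comp x differentiable_sp.differentiableAt), deriv_diag4]

lemma met_eq_Apot (f g : ℝ → ℝ) (H : (Fin 3 → ℝ) → ℝ) : met f g H = Apot f (-g) H := rfl

lemma metInv_eq_diag4 (f g : ℝ → ℝ) (H : (Fin 3 → ℝ) → ℝ) (b c : Fin 4) (x : Fin 4 → ℝ) :
    metInv f g H b c x = diag4 (f (H (sp x)))⁻¹ (-(g (H (sp x)))⁻¹) b c := rfl

lemma eta_eq_diag4 (b c : Fin 4) : eta b c = diag4 1 (-1) b c := rfl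

noncomputable def chrLowForm (F G F' G' : ℝ) (D : Fin 4 → ℝ) (a b c : Fin 4) : ℝ :=
  diag4 1 (-1) a a * ((1 / 2) * (diag4 F⁻¹ (-G⁻¹) a a *
    (diag4 F' (-G') a c * D b + diag4 F' (-G') a b * D c - diag4 F' (-G') b c * D a)))

lemma chrLow_eq_chrLowForm {f g : ℝ → ℝ} {H : (Fin 3 → ℝ) → ℝ} {x : Fin 4 → ℝ}
    (hf : DifferentiableAt ℝ f (H (sp x))) (hg : DifferentiableAt ℝ g (H (sp x)))
    (hH : DifferentiableAt ℝ H (sp x)) (a b c : Fin 4) :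
    chrLow f g H a b c x = chrLowForm (f (H (sp x))) (g (H (sp x)))
      (deriv f (H (sp x))) (deriv g (H (sp x))) (fun j => pdR j (fun y => H (sp y)) x) a b c := by
  have hmet := pdR_Apot hf hg.neg hH
  rw [← met_eq_Apot] at hmet
  simp only [chrLow, chrUp, eta_eq_diag4, metInv_eq_diag4, hmet, sum_diag4_mul, deriv.neg',
    chrLowForm]

lemma symPart_eq (Γ : Fin 4 → Fin 4 → Fin 4 → (Fin 4 → ℝ) → ℝ) (μ ν lam : Fin 4)
    (x : Fin 4 → ℝ) :
    symPart Γ μ ν lam x = (6 : ℝ)⁻¹ *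
      (Γ μ ν lam x + Γ ν μ lam x + Γ lam ν μ x + Γ μ lam ν x + Γ ν lam μ x + Γ lam μ ν x) := by
  have huniv : (Finset.univ : Finset (Equiv.Perm (Fin 3))) =
      {1, Equiv.swap 0 1, Equiv.swap 0 2, Equiv.swap 1 2,
        (Equiv.swap 0 1).trans (Equiv.swap 0 2), (Equiv.swap 0 2).trans (Equiv.swap 0 1)} := by
    decide
  rw [symPart, huniv, show ((Nat.factorial 3 : ℕ) : ℝ) = 6 by norm_num]
  congr 1
  simp +decide [Finset.sum_insert, Equiv.swap_apply_def, add_assoc]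

lemma chrLowForm_symFree_eq (F G F' G' U' V' : ℝ) (D : Fin 4 → ℝ) (hD0 : D 0 = 0)
    (hU : U' = -(2 * F') / (3 * F) - (2 * F') / (3 * G)) (hV : V' = 4 / 3 * (G' / G))
    (a b c : Fin 4) :
    let Γ := chrLowForm F G F' G' D
    Γ a b c - (6 : ℝ)⁻¹ * (Γ a b c + Γ b a c + Γ c b a + Γ a c b + Γ b c a + Γ c a b) =
      1 / 2 * (diag4 U' V' b c * D a) -
        1 / 4 * (diag4 U' V' a c * D b + diag4 U' V' a b * D c) := by
  subst hU hV
  fin_cases a <;> fin_cases b <;> fin_cases c <;>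
    simp only [chrLowForm, diag4, hD0, Fin.reduceFinMk, Fin.isValue, Fin.reduceEq,
      reduceIte] <;>
    ring

theorem stmt14_general (H : (Fin 3 → ℝ) → ℝ) (f g : ℝ → ℝ)
    (hH : ContDiff ℝ (⊤ : ℕ∞) H) (hf : ContDiff ℝ (⊤ : ℕ∞) f)
    (hg : ContDiff ℝ (⊤ : ℕ∞) g)
    (hgpos : ∀ t, 0 < g t)
    (u : ℝ → ℝ) (hu : ContDiff ℝ (⊤ : ℕ∞) u)
    (hueq : ∀ t, deriv u t = -(2 * deriv f t) / (3 * f t) - (2 * deriv f t) / (3 * g t))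
    (v : ℝ → ℝ) (hv : v = fun t => (4 / 3 : ℝ) * Real.log (g t)) :
    ∀ (μ ν lam : Fin 4) (x : Fin 4 → ℝ),
      Fsf f g H μ ν lam x =
        (1 / 2 : ℝ) * pdR μ (Apot u v H ν lam) x -
          (1 / 4 : ℝ) * (pdR ν (Apot u v H μ lam) x + pdR lam (Apot u v H μ ν) x) := by
  intro μ ν lam x
  have hHx : DifferentiableAt ℝ H (sp x) := hH.differentiable (by simp) _
  have hgd : Differentiable ℝ g := hg.differentiable (by simp)
  have hvd (t : ℝ) : HasDerivAt v (4 / 3 * (deriv g t / g t)) t :=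
    hv ▸ ((hgd t).hasDerivAt.log (hgpos t).ne').const_mul _
  simp only [Fsf, symPart_eq, chrLow_eq_chrLowForm (hf.differentiable (by simp) _) (hgd _) hHx,
    pdR_Apot (hu.differentiable (by simp) _) (hvd _).differentiableAt hHx]
  exact chrLowForm_symFree_eq _ _ _ _ _ _ _ (pdR_zero_comp_sp H x) (hueq _) (hvd _).deriv
    μ ν lam

/-- (Main result of Section 4: `F = d_G A`.)  For the isotropic metric
`ds² = f(H) dt² − g(H) d\vec{x}²` on `ℝ⁴`, with `u` a smooth solution of
`u' = −2f'/(3f) − 2f'/(3g)`, `v = (4/3) log∘g`, and the potential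
`A = u(H) dt² + v(H) d\vec{x}²`, the symmetric-free part `F` of the η-lowered Christoffel
symbols satisfies `F_{μνλ} = ½ ∂_μ A_{νλ} − ¼ (∂_ν A_{μλ} + ∂_λ A_{μν})` for all
`μ, ν, λ ∈ {0,1,2,3}`. -/
theorem stmt14 (H : (Fin 3 → ℝ) → ℝ) (f g : ℝ → ℝ)
    (hH : ContDiff ℝ (⊤ : ℕ∞) H) (hf : ContDiff ℝ (⊤ : ℕ∞) f)
    (hg : ContDiff ℝ (⊤ : ℕ∞) g)
    (hfpos : ∀ t, 0 < f t) (hgpos : ∀ t, 0 < g t)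
    (u : ℝ → ℝ) (hu : ContDiff ℝ (⊤ : ℕ∞) u)
    (hueq : ∀ t, deriv u t = -(2 * deriv f t) / (3 * f t) - (2 * deriv f t) / (3 * g t))
    (v : ℝ → ℝ) (hv : v = fun t => (4 / 3 : ℝ) * Real.log (g t)) :
    ∀ (μ ν lam : Fin 4) (x : Fin 4 → ℝ),
      Fsf f g H μ ν lam x =
        (1 / 2 : ℝ) * pdR μ (Apot u v H ν lam) x -
          (1 / 4 : ℝ) * (pdR ν (Apot u v H μ lam) x + pdR lam (Apot u v H μ ν) x) :=
  stmt14_general H f g hH hf hg hgpos u hu hueq v hv
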